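/- For positive integers a, b, r, s, the ordinary shuffle product in Q⟨x,y⟩ satisfies x^a y^r ⧢ x^b y^s = Σ_{α₁+⋯+α_{r+s}=a+b, α_i≥0} [ Σ_{l=1}^{r} C(α₁,a) C(r+s−l−1, r−l) Π_{j=l+2}^{r+s} δ_{α_j,0} + Σ_{l=1}^{s} C(α₁,b) C(r+s−l−1, s−l) Π_{j=l+2}^{r+s} δ_{α_j,0} ] x^{α₁} y x^{α₂} y ⋯ x^{α_{r+s}} y. -/

import Mathlib

open scoped BigOperators

noncomputable section

/-- `Q⟨x,y⟩`: the free noncommutative Q-algebra on two letters. -/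
abbrev H0 : Type := MonoidAlgebra ℚ (FreeMonoid (Fin 2))

/-- The word `l` as an element of `Q⟨x,y⟩`. -/
def wd0 (l : List (Fin 2)) : H0 :=
  MonoidAlgebra.of ℚ (FreeMonoid (Fin 2)) (FreeMonoid.ofList l)

/-- The letter `x`. -/
def wx0 : H0 := wd0 [0]
/-- The letter `y`. -/
def wy0 : H0 := wd0 [1]

/-- The ordinary shuffle product on words. -/
def shW0 : List (Fin 2) → List (Fin 2) → H0
  | [], w => wd0 w
  | a :: w, [] => wd0 (a :: w)
  | a :: w1, b :: w2 =>
      wd0 [a] * shW0 w1 (b :: w2) + wd0 [b] * shW0 (a :: w1) w2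
  termination_by w1 w2 => w1.length + w2.length

/-- The shuffle product on `Q⟨x,y⟩`, extended Q-bilinearly. -/
def shH0 (u v : H0) : H0 :=
  u.coeff.sum fun w1 c1 => v.coeff.sum fun w2 c2 =>
    (c1 * c2) • shW0 (FreeMonoid.toList w1) (FreeMonoid.toList w2)

open Finset

/-!
Both sides obey the recursion defining the shuffle product:
`xu ⧢ xv = x(u ⧢ xv) + x(xu ⧢ v)` and `yu ⧢ xv = y(u ⧢ xv) + x(yu ⧢ v)`. On the right-hand side,
read as a function of `(a, b, r, s)` and of the number of blocks, the first is Pascal's rule for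
`C(α₁, ·)`, and the second splits off the tuples with `α₁ = 0`, which are the words starting with
`y`. The formula stays valid for an empty left word (`a = r = 0`) and for `y^r ⧢ y^s`, where it
reduces to the hockey-stick identity; these are the base cases, and `b = 0` follows by commutativity
of `⧢`.
-/

theorem Finset.Nat.sum_antidiagonalTuple_succ {M : Type*} [AddCommMonoid M] (k n : ℕ)
    (f : (Fin (k + 1) → ℕ) → M) :
    ∑ α ∈ Nat.antidiagonalTuple (k + 1) n, f α =
      ∑ pm ∈ antidiagonal n, ∑ β ∈ Nat.antidiagonalTuple k pm.2, f (Fin.cons pm.1 β) := by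
  rw [sum_sigma']
  refine sum_nbij' (fun α => ⟨(α 0, n - α 0), Fin.tail α⟩) (fun x => Fin.cons x.1.1 x.2)
    ?_ ?_ (fun α _ => Fin.cons_self_tail α) ?_ (fun α _ => by rw [Fin.cons_self_tail])
  · intro α hα
    simp only [mem_sigma, HasAntidiagonal.mem_antidiagonal, Nat.mem_antidiagonalTuple,
      Fin.sum_univ_succ] at hα ⊢
    exact ⟨by omega, by simp only [Fin.tail]; omega⟩
  · rintro ⟨⟨p, m⟩, β⟩ h
    simp only [mem_sigma, HasAntidiagonal.mem_antidiagonal, Nat.mem_antidiagonalTuple,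
      Fin.sum_univ_succ, Fin.cons_zero, Fin.cons_succ] at h ⊢
    omega
  · rintro ⟨⟨p, m⟩, β⟩ h
    simp only [mem_sigma, HasAntidiagonal.mem_antidiagonal] at h
    simp [← h.1]

theorem Nat.sum_range_choose_sub_eq_choose (u v : ℕ) (h : 1 ≤ u + v) :
    ∑ i ∈ range u, (u + v - i - 2).choose (u - i - 1) = (u + v - 1).choose v := by
  induction u with
  | zero => simp [Nat.choose_eq_zero_of_lt (show v - 1 < v by omega)]
  | succ u ih =>
    rw [sum_range_succ']
    rcases Nat.eq_zero_or_pos (u + v) with huv | huv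
    · obtain ⟨rfl, rfl⟩ : u = 0 ∧ v = 0 := by omega
      simp
    simp only [show ∀ i, u + 1 + v - (i + 1) - 2 = u + v - i - 2 by omega,
      show ∀ i, u + 1 - (i + 1) - 1 = u - i - 1 by omega, ih huv,
      show u + 1 + v - 0 - 2 = u + v - 1 by omega, show u + 1 - 0 - 1 = u by omega]
    rcases v with _ | v
    · simp [Nat.choose_eq_zero_of_lt (show u - 1 < u by omega)]
    · rw [show u + 1 + (v + 1) - 1 = (u + v) + 1 by omega, Nat.choose_succ_succ',
        show u + (v + 1) - 1 = u + v by omega, ← Nat.choose_symm_add, add_comm]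

theorem wd0_mul (u v : List (Fin 2)) : wd0 u * wd0 v = wd0 (u ++ v) := by
  simp [wd0]

theorem wd0_singleton_pow (c : Fin 2) (n : ℕ) : wd0 [c] ^ n = wd0 (List.replicate n c) := by
  induction n with
  | zero => rfl
  | succ n ih => rw [pow_succ', ih, wd0_mul]; rfl

theorem wd0_singleton_mul_smul (c : Fin 2) (q : ℚ) (w : List (Fin 2)) :
    wd0 [c] * (q • wd0 w) = q • wd0 (c :: w) := by
  rw [mul_smul_comm, wd0_mul]; rfl

theorem shH0_wd0 (u v : List (Fin 2)) : shH0 (wd0 u) (wd0 v) = shW0 u v := by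
  simp [shH0, wd0, MonoidAlgebra.of_apply, Finsupp.sum_single_index]

@[simp]
theorem shW0_nil_left (w : List (Fin 2)) : shW0 [] w = wd0 w := by
  rw [shW0]

@[simp]
theorem shW0_nil_right (w : List (Fin 2)) : shW0 w [] = wd0 w := by
  cases w <;> rw [shW0]

theorem shW0_cons_cons (c d : Fin 2) (u v : List (Fin 2)) :
    shW0 (c :: u) (d :: v) = wd0 [c] * shW0 u (d :: v) + wd0 [d] * shW0 (c :: u) v := by
  rw [shW0]

theorem shW0_comm : ∀ u v : List (Fin 2), shW0 u v = shW0 v u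
  | [], v => by simp
  | c :: u, [] => by simp
  | c :: u, d :: v => by
    rw [shW0_cons_cons, shW0_cons_cons, shW0_comm u (d :: v), shW0_comm (c :: u) v, add_comm]
termination_by u v => u.length + v.length

theorem shW0_replicate (c : Fin 2) :
    ∀ r s : ℕ, shW0 (List.replicate r c) (List.replicate s c) =
      ((r + s).choose r : ℚ) • wd0 (List.replicate (r + s) c)
  | 0, s => by simp
  | r + 1, 0 => by simp
  | r + 1, s + 1 => by
    rw [List.replicate_succ, List.replicate_succ, shW0_cons_cons, ← List.replicate_succ,
      ← List.replicate_succ, shW0_replicate c r (s + 1), shW0_replicate c (r + 1) s,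
      show r + 1 + s = r + (s + 1) by omega, wd0_singleton_mul_smul, wd0_singleton_mul_smul,
      ← add_smul, ← Nat.cast_add, ← Nat.choose_succ_succ', ← List.replicate_succ,
      show r + 1 + (s + 1) = r + (s + 1) + 1 by omega]

def xyMonomial (a r : ℕ) : List (Fin 2) := List.replicate a 0 ++ List.replicate r 1

theorem xyMonomial_succ (a r : ℕ) : xyMonomial (a + 1) r = 0 :: xyMonomial a r := rfl

theorem wx0_pow_mul_wy0_pow (a r : ℕ) : wx0 ^ a * wy0 ^ r = wd0 (xyMonomial a r) := by
  rw [wx0, wy0, wd0_singleton_pow, wd0_singleton_pow, wd0_mul, xyMonomial]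

section Coefficients

variable {k : ℕ}

def blockWord (α : Fin k → ℕ) : H0 := (List.ofFn fun j => wx0 ^ α j * wy0).prod

theorem blockWord_cons (p : ℕ) (β : Fin k → ℕ) :
    blockWord (Fin.cons p β : Fin (k + 1) → ℕ) = wx0 ^ p * wy0 * blockWord β := by
  simp [blockWord, List.ofFn_succ]

theorem blockWord_zero : blockWord (0 : Fin k → ℕ) = wy0 ^ k := by
  simp [blockWord]

theorem wx0_mul_blockWord_cons (p : ℕ) (β : Fin k → ℕ) :
    wx0 * blockWord (Fin.cons p β : Fin (k + 1) → ℕ) = blockWord (Fin.cons (p + 1) β) := by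
  rw [blockWord_cons, blockWord_cons, pow_succ', mul_assoc, mul_assoc, mul_assoc]

def headOrZero (α : Fin k → ℕ) : ℕ := if h : 0 < k then α ⟨0, h⟩ else 0

theorem headOrZero_cons (p : ℕ) (β : Fin k → ℕ) : headOrZero (Fin.cons p β : Fin (k + 1) → ℕ) = p :=
  dif_pos k.succ_pos

def VanishesFrom (t : ℕ) (α : Fin k → ℕ) : Prop := ∀ j : Fin k, t ≤ j → α j = 0

instance (t : ℕ) (α : Fin k → ℕ) : Decidable (VanishesFrom t α) :=
  inferInstanceAs (Decidable (∀ j : Fin k, t ≤ j → α j = 0))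

theorem VanishesFrom.mono {t t' : ℕ} {α : Fin k → ℕ} (h : VanishesFrom t α) (htt' : t ≤ t') :
    VanishesFrom t' α :=
  fun j hj => h j (htt'.trans hj)

theorem vanishesFrom_succ_cons (t p : ℕ) (β : Fin k → ℕ) :
    VanishesFrom (t + 1) (Fin.cons p β : Fin (k + 1) → ℕ) ↔ VanishesFrom t β := by
  simp [VanishesFrom, Fin.forall_fin_succ]

theorem prod_ite_eq_ite_vanishesFrom (t : ℕ) (α : Fin k → ℕ) :
    ∏ j : Fin k, (if t ≤ (j : ℕ) ∧ α j ≠ 0 then 0 else 1 : ℕ) =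
      if VanishesFrom t α then 1 else 0 := by
  by_cases h : VanishesFrom t α
  · rw [if_pos h]
    exact prod_eq_one fun j _ => if_neg fun hj => hj.2 (h j hj.1)
  · obtain ⟨j, hj, hne⟩ : ∃ j : Fin k, t ≤ (j : ℕ) ∧ α j ≠ 0 := by simpa [VanishesFrom] using h
    rw [if_neg h]
    exact prod_eq_zero (mem_univ j) (if_pos ⟨hj, hne⟩)

theorem choose_headOrZero_eq_ite {n : ℕ} {α : Fin k → ℕ} (hα : ∑ j, α j = n) :
    (headOrZero α).choose n = if VanishesFrom 1 α then 1 else 0 := by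
  cases k with
  | zero => simp_all [headOrZero, VanishesFrom]
  | succ k =>
    induction α using Fin.consCases with | cons p β =>
    simp only [headOrZero_cons, vanishesFrom_succ_cons]
    simp only [Fin.sum_univ_succ, Fin.cons_zero, Fin.cons_succ] at hα
    have hβ : VanishesFrom 0 β ↔ ∑ j, β j = 0 := by
      simp [VanishesFrom, Finset.sum_eq_zero_iff]
    split_ifs with h
    · simp [← hα, hβ.1 h]
    · exact Nat.choose_eq_zero_of_lt (by rw [hβ] at h; omega)

theorem vanishesFrom_one_iff_eq_cons {n : ℕ} {α : Fin (k + 1) → ℕ} (hα : ∑ j, α j = n) :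
    VanishesFrom 1 α ↔ α = Fin.cons n 0 := by
  induction α using Fin.consCases with | cons p β =>
  simp only [Fin.sum_univ_succ, Fin.cons_zero, Fin.cons_succ] at hα
  rw [vanishesFrom_succ_cons, Fin.cons_inj]
  constructor
  · intro h
    have hβ : β = 0 := funext fun j => h j (Nat.zero_le _)
    simp [hβ, ← hα]
  · rintro ⟨-, rfl⟩ j _
    rfl

-- With `l = i + 1` and 0-based positions: `Σ_{l=1}^{u} C(u+v-l-1, u-l) Π_{j≥l+2} δ_{α_j,0}`.
def tailWeight (u v : ℕ) (α : Fin k → ℕ) : ℕ :=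
  ∑ i ∈ range u, if VanishesFrom (i + 2) α then (u + v - i - 2).choose (u - i - 1) else 0

theorem tailWeight_of_vanishesFrom_one {u v : ℕ} {α : Fin k → ℕ} (h : VanishesFrom 1 α)
    (huv : 1 ≤ u + v) : tailWeight u v α = (u + v - 1).choose v := by
  rw [tailWeight, ← Nat.sum_range_choose_sub_eq_choose u v huv]
  exact sum_congr rfl fun i _ => if_pos (h.mono (by omega))

theorem tailWeight_cons (u v p q : ℕ) (β : Fin k → ℕ) :
    tailWeight u v (Fin.cons p β : Fin (k + 1) → ℕ) = tailWeight u v (Fin.cons q β) := by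
  simp only [tailWeight, vanishesFrom_succ_cons]

theorem tailWeight_succ_cons (u v p : ℕ) (β : Fin k → ℕ) :
    tailWeight (u + 1) v (Fin.cons p β : Fin (k + 1) → ℕ) =
      tailWeight u v β + if VanishesFrom 1 β then (u + v - 1).choose u else 0 := by
  rw [tailWeight, sum_range_succ']
  simp only [vanishesFrom_succ_cons, tailWeight,
    show ∀ i, u + 1 + v - (i + 1) - 2 = u + v - i - 2 by omega,
    show ∀ i, u + 1 - (i + 1) - 1 = u - i - 1 by omega,
    show u + 1 + v - 0 - 2 = u + v - 1 by omega, show u + 1 - 0 - 1 = u by omega]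

def shuffleCoeff (a b r s : ℕ) (α : Fin k → ℕ) : ℕ :=
  (headOrZero α).choose a * tailWeight r s α + (headOrZero α).choose b * tailWeight s r α

theorem shuffleCoeff_comm (a b r s : ℕ) (α : Fin k → ℕ) :
    shuffleCoeff a b r s α = shuffleCoeff b a s r α :=
  add_comm _ _

theorem shuffleCoeff_succ_succ_cons_succ (a b r s p : ℕ) (β : Fin k → ℕ) :
    shuffleCoeff (a + 1) (b + 1) r s (Fin.cons (p + 1) β : Fin (k + 1) → ℕ) =
      shuffleCoeff a (b + 1) r s (Fin.cons p β) + shuffleCoeff (a + 1) b r s (Fin.cons p β) := by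
  simp only [shuffleCoeff, headOrZero_cons, Nat.choose_succ_succ' p, tailWeight_cons _ _ (p + 1) p]
  ring

theorem shuffleCoeff_zero_succ_cons_succ {b p : ℕ} (r s : ℕ) (hp : p ≤ b) (β : Fin k → ℕ) :
    shuffleCoeff 0 (b + 1) r s (Fin.cons (p + 1) β : Fin (k + 1) → ℕ) =
      shuffleCoeff 0 b r s (Fin.cons p β) := by
  simp only [shuffleCoeff, headOrZero_cons, Nat.choose_succ_succ' p, tailWeight_cons _ _ (p + 1) p,
    Nat.choose_zero_right, Nat.choose_eq_zero_of_lt (Nat.lt_succ_of_le hp)]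
  ring

theorem shuffleCoeff_zero_succ_cons_zero {b : ℕ} (r : ℕ) {s : ℕ} (hs : 1 ≤ s) {β : Fin k → ℕ}
    (hβ : ∑ j, β j = b + 1) :
    shuffleCoeff 0 (b + 1) (r + 1) s (Fin.cons 0 β : Fin (k + 1) → ℕ) =
      shuffleCoeff 0 (b + 1) r s β := by
  rw [shuffleCoeff, shuffleCoeff, headOrZero_cons, tailWeight_succ_cons,
    choose_headOrZero_eq_ite hβ]
  split_ifs with h
  · rw [tailWeight_of_vanishesFrom_one (u := s) h (by omega), Nat.add_comm s r]
    simp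
  · simp

theorem shuffleCoeff_zero_zero_zero {r s : ℕ} (h : 1 ≤ r + s) :
    shuffleCoeff 0 0 r s (0 : Fin k → ℕ) = (r + s).choose r := by
  have hv : VanishesFrom 1 (0 : Fin k → ℕ) := fun _ _ => rfl
  rw [shuffleCoeff, tailWeight_of_vanishesFrom_one hv h,
    tailWeight_of_vanishesFrom_one hv (by omega)]
  rcases r with _ | r
  · simp [Nat.choose_eq_zero_of_lt (show s - 1 < s by omega)]
  · rw [show r + 1 + s - 1 = r + s by omega, show s + (r + 1) - 1 = r + s by omega,
      show r + 1 + s = r + s + 1 by omega, Nat.choose_succ_succ', Nat.choose_symm_add]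
    simp

theorem shuffleCoeff_zero_left {b s : ℕ} (hs : 1 ≤ s) {α : Fin k → ℕ} (hα : ∑ j, α j = b) :
    shuffleCoeff 0 b 0 s α = if VanishesFrom 1 α then 1 else 0 := by
  rw [shuffleCoeff, choose_headOrZero_eq_ite hα]
  split_ifs with h
  · rw [tailWeight_of_vanishesFrom_one (u := s) h (by omega)]
    simp [tailWeight]
  · simp [tailWeight]

theorem choose_mul_tailWeight_eq (c u v : ℕ) (α : Fin k → ℕ) (hk : 0 < k) :
    (headOrZero α).choose c * tailWeight u v α =
      ∑ l ∈ Icc 1 u, (α ⟨0, hk⟩).choose c * (u + v - l - 1).choose (u - l) *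
        ∏ j : Fin k, (if l + 1 ≤ (j : ℕ) ∧ α j ≠ 0 then 0 else 1) := by
  rw [headOrZero, dif_pos hk, tailWeight, mul_sum, ← Ico_add_one_right_eq_Icc, sum_Ico_eq_sum_range,
    Nat.add_sub_cancel]
  refine sum_congr rfl fun i _ => ?_
  rw [prod_ite_eq_ite_vanishesFrom, show 1 + i + 1 = i + 2 by omega,
    show u + v - (1 + i) - 1 = u + v - i - 2 by omega, show u - (1 + i) = u - i - 1 by omega]
  split_ifs <;> simp

end Coefficients

def shuffleFormula (k a b r s : ℕ) : H0 :=
  ∑ α ∈ Nat.antidiagonalTuple k (a + b), (shuffleCoeff a b r s α : ℚ) • blockWord α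

theorem shuffleFormula_comm (k a b r s : ℕ) :
    shuffleFormula k a b r s = shuffleFormula k b a s r := by
  simp only [shuffleFormula, shuffleCoeff_comm a b, Nat.add_comm a b]

theorem wx0_mul_shuffleFormula (k a b r s : ℕ) :
    wx0 * shuffleFormula (k + 1) a b r s =
      ∑ pm ∈ antidiagonal (a + b), ∑ β ∈ Nat.antidiagonalTuple k pm.2,
        (shuffleCoeff a b r s (Fin.cons pm.1 β : Fin (k + 1) → ℕ) : ℚ) •
          blockWord (Fin.cons (pm.1 + 1) β : Fin (k + 1) → ℕ) := by
  simp only [shuffleFormula, Nat.sum_antidiagonalTuple_succ, mul_sum, mul_smul_comm,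
    wx0_mul_blockWord_cons]

theorem shuffleFormula_succ_succ (k a b r s : ℕ) :
    shuffleFormula k (a + 1) (b + 1) r s =
      wx0 * shuffleFormula k a (b + 1) r s + wx0 * shuffleFormula k (a + 1) b r s := by
  cases k with
  | zero =>
    simp [shuffleFormula, show a + 1 + (b + 1) = a + b + 1 + 1 by omega,
      show a + (b + 1) = a + b + 1 by omega, show a + 1 + b = a + b + 1 by omega]
  | succ k =>
    rw [wx0_mul_shuffleFormula, wx0_mul_shuffleFormula, show a + 1 + b = a + (b + 1) by omega,
      ← sum_add_distrib, shuffleFormula, show a + 1 + (b + 1) = a + (b + 1) + 1 by omega,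
      Nat.sum_antidiagonalTuple_succ, Nat.sum_antidiagonal_succ]
    have hhead (β : Fin k → ℕ) :
        shuffleCoeff (a + 1) (b + 1) r s (Fin.cons 0 β : Fin (k + 1) → ℕ) = 0 := by
      simp [shuffleCoeff, headOrZero_cons]
    simp only [hhead, Nat.cast_zero, zero_smul, sum_const_zero, zero_add,
      shuffleCoeff_succ_succ_cons_succ, Nat.cast_add, add_smul, sum_add_distrib]

theorem shuffleFormula_zero_succ_succ (k b r : ℕ) {s : ℕ} (hs : 1 ≤ s) :
    shuffleFormula (k + 1) 0 (b + 1) (r + 1) s =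
      wy0 * shuffleFormula k 0 (b + 1) r s + wx0 * shuffleFormula (k + 1) 0 b (r + 1) s := by
  rw [wx0_mul_shuffleFormula, shuffleFormula, zero_add, Nat.sum_antidiagonalTuple_succ,
    Nat.sum_antidiagonal_succ, shuffleFormula, zero_add, mul_sum, zero_add]
  congr 1
  · refine sum_congr rfl fun β hβ => ?_
    rw [shuffleCoeff_zero_succ_cons_zero r hs (Nat.mem_antidiagonalTuple.1 hβ), blockWord_cons,
      pow_zero, one_mul, mul_smul_comm]
  · refine sum_congr rfl fun pm hpm => sum_congr rfl fun β _ => ?_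
    rw [shuffleCoeff_zero_succ_cons_succ _ _ (HasAntidiagonal.antidiagonal.fst_le hpm)]

theorem shuffleFormula_zero_zero {r s : ℕ} (h : 1 ≤ r + s) :
    shuffleFormula (r + s) 0 0 r s = ((r + s).choose r : ℚ) • wd0 (List.replicate (r + s) 1) := by
  rw [shuffleFormula, add_zero, Nat.antidiagonalTuple_zero_right, sum_singleton,
    shuffleCoeff_zero_zero_zero h, blockWord_zero, wy0, wd0_singleton_pow]

theorem shuffleFormula_zero_left (b : ℕ) {s : ℕ} (hs : 1 ≤ s) :
    shuffleFormula s 0 b 0 s = wd0 (xyMonomial b s) := by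
  obtain ⟨k, rfl⟩ : ∃ k, s = k + 1 := ⟨s - 1, by omega⟩
  have hsingle : ∀ α ∈ Nat.antidiagonalTuple (k + 1) b,
      (shuffleCoeff 0 b 0 (k + 1) α : ℚ) • blockWord α =
        if α = Fin.cons b 0 then blockWord α else 0 := by
    intro α hα
    rw [Nat.mem_antidiagonalTuple] at hα
    rw [shuffleCoeff_zero_left (by omega) hα]
    simp only [vanishesFrom_one_iff_eq_cons hα]
    split_ifs <;> simp
  rw [shuffleFormula, zero_add, sum_congr rfl hsingle, sum_ite_eq',
    if_pos (by simp [Nat.mem_antidiagonalTuple]), blockWord_cons, blockWord_zero, mul_assoc, ← pow_succ', wx0_pow_mul_wy0_pow]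

theorem shW0_replicate_one_xyMonomial (b r : ℕ) {s : ℕ} (hs : 1 ≤ s) :
    shW0 (List.replicate r 1) (xyMonomial b s) = shuffleFormula (r + s) 0 b r s := by
  induction b generalizing r with
  | zero => rw [xyMonomial, List.replicate_zero, List.nil_append, shW0_replicate,
      shuffleFormula_zero_zero (by omega)]
  | succ b ihb =>
    induction r with
    | zero => rw [List.replicate_zero, shW0_nil_left, zero_add, shuffleFormula_zero_left _ hs]
    | succ r ihr =>
      rw [List.replicate_succ, xyMonomial_succ, shW0_cons_cons, ← xyMonomial_succ,
        ← List.replicate_succ, ihr, ihb, show r + 1 + s = r + s + 1 by omega,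
        shuffleFormula_zero_succ_succ _ _ _ hs]
      rfl

theorem shW0_xyMonomial (a b : ℕ) {r s : ℕ} (hr : 1 ≤ r) (hs : 1 ≤ s) :
    shW0 (xyMonomial a r) (xyMonomial b s) = shuffleFormula (r + s) a b r s := by
  induction a generalizing b with
  | zero => exact shW0_replicate_one_xyMonomial b r hs
  | succ a iha =>
    induction b with
    | zero =>
      rw [shW0_comm, add_comm r s, shuffleFormula_comm]
      exact shW0_replicate_one_xyMonomial (a + 1) s hr
    | succ b ihb =>
      rw [xyMonomial_succ, xyMonomial_succ, shW0_cons_cons, ← xyMonomial_succ, ← xyMonomial_succ,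
        iha, ihb, shuffleFormula_succ_succ]
      rfl

/-- Shuffle product formula:
`x^a y^r ⧢ x^b y^s = Σ_{α₁+⋯+α_{r+s}=a+b}
  [Σ_{l=1}^{r} C(α₁,a)C(r+s−l−1,r−l)Π_{j=l+2}^{r+s}δ_{α_j,0}
   + Σ_{l=1}^{s} C(α₁,b)C(r+s−l−1,s−l)Π_{j=l+2}^{r+s}δ_{α_j,0}] x^{α₁}y⋯x^{α_{r+s}}y`. -/
theorem shuffle_height_one (a b r s : ℕ) (hr : 1 ≤ r) (hs : 1 ≤ s) :
    shH0 (wx0 ^ a * wy0 ^ r) (wx0 ^ b * wy0 ^ s) =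
      ∑ α ∈ Finset.Nat.antidiagonalTuple (r + s) (a + b),
        (((∑ l ∈ Finset.Icc 1 r,
              (α ⟨0, by omega⟩).choose a * (r + s - l - 1).choose (r - l) *
                ∏ j : Fin (r + s), (if l + 1 ≤ (j : ℕ) ∧ α j ≠ 0 then 0 else 1)) +
          (∑ l ∈ Finset.Icc 1 s,
              (α ⟨0, by omega⟩).choose b * (r + s - l - 1).choose (s - l) *
                ∏ j : Fin (r + s), (if l + 1 ≤ (j : ℕ) ∧ α j ≠ 0 then 0 else 1)) : ℕ) : ℚ) •
          (List.ofFn fun j : Fin (r + s) => wx0 ^ α j * wy0).prod := by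
  rw [wx0_pow_mul_wy0_pow, wx0_pow_mul_wy0_pow, shH0_wd0, shW0_xyMonomial a b hr hs, shuffleFormula]
  refine sum_congr rfl fun α _ => ?_
  rw [shuffleCoeff, choose_mul_tailWeight_eq a r s α (by omega),
    choose_mul_tailWeight_eq b s r α (by omega), Nat.add_comm s r]
  rfl
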